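/- Let 1 ≤ p ≤ ∞. If φ : ℤ → ℂ factors as φ = ψ ∘ q, where q : ℤ → ℤ/nℤ is the quotient map and ψ : ℤ/nℤ → ℂ, then ‖M_φ : L^p(𝕋) → L^p(𝕋)‖ ≤ ‖M_ψ : L^p(ℤ/nℤ) → L^p(ℤ/nℤ)‖, where L^p(ℤ/nℤ) denotes L^p of the n-point cyclic group with normalized counting measure. -/

import Mathlib

open MeasureTheory
open scoped BigOperators ENNReal NNReal

/-- The normalized counting measure on the cyclic group `ℤ/nℤ`. -/
noncomputable def cycMeasure (n : ℕ) : Measure (ZMod n) := (n : ℝ≥0∞)⁻¹ • Measure.count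

/-- The character of `ℤ/nℤ` indexed by `k ∈ ℤ/nℤ`:  `j ↦ e^{2πikj/n}`. -/
noncomputable def cycChar (n : ℕ) (k j : ZMod n) : ℂ :=
  Complex.exp (2 * Real.pi * Complex.I * (ZMod.val k) * (ZMod.val j) / n)

namespace Periodization

noncomputable def emb (n : ℕ) (j : ZMod n) : AddCircle (1:ℝ) := (((j.val : ℝ) / n : ℝ) : AddCircle (1:ℝ))

variable {n : ℕ} [NeZero n]

lemma fourier_add_pt (k : ℤ) (x y : AddCircle (1:ℝ)) :
    (fourier k (x + y) : ℂ) = fourier k x * fourier k y := by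
  rw [fourier_apply, fourier_apply, fourier_apply, smul_add, AddCircle.toCircle_add]
  simp

lemma fourier_emb (k : ℤ) (j : ZMod n) :
    (fourier k (emb n j) : ℂ) = cycChar n (k : ZMod n) j := by
  have hn : (n:ℝ) ≠ 0 := Nat.cast_ne_zero.2 (NeZero.ne n)
  obtain ⟨t, ht⟩ : (n:ℤ) ∣ (k - ((k : ZMod n).val : ℤ)) := by
    rw [← ZMod.intCast_zmod_eq_zero_iff_dvd]
    push_cast
    simp [ZMod.intCast_cast, ZMod.cast_id]
  have hk : (k:ℂ) = ((k : ZMod n).val : ℂ) + (n:ℂ) * (t:ℂ) := by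
    have : (k:ℤ) = ((k : ZMod n).val : ℤ) + (n:ℤ) * t := by linarith [ht]
    exact_mod_cast congrArg (Int.cast : ℤ → ℂ) this
  rw [emb, fourier_coe_apply, cycChar]
  have key : 2 * (Real.pi:ℂ) * Complex.I * (k:ℂ) * (((j.val : ℝ) / n : ℝ) : ℂ) / ((1:ℝ):ℂ)
      = 2 * (Real.pi:ℂ) * Complex.I * ((k : ZMod n).val : ℂ) * ((j.val : ℕ) : ℂ) / (n:ℂ)
        + ((t * (j.val:ℤ) : ℤ) : ℂ) * (2 * (Real.pi:ℂ) * Complex.I) := by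
    have hnc : (n:ℂ) ≠ 0 := by exact_mod_cast hn
    rw [hk]
    push_cast
    field_simp
  rw [key, Complex.exp_add, Complex.exp_int_mul_two_pi_mul_I, mul_one]

lemma sum_shift (s : Finset ℤ) (a : ℤ → ℂ) (x : AddCircle (1:ℝ)) (j : ZMod n) :
    ∑ k ∈ s, a k * fourier k (x + emb n j)
      = ∑ m : ZMod n, (∑ k ∈ s.filter (fun k : ℤ => (k : ZMod n) = m), a k * fourier k x) * cycChar n m j := by
  calc ∑ k ∈ s, a k * fourier k (x + emb n j)
      = ∑ m : ZMod n, ∑ k ∈ s.filter (fun k : ℤ => (k : ZMod n) = m), a k * fourier k (x + emb n j) :=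
        (Finset.sum_fiberwise s (fun k => (k : ZMod n)) _).symm
    _ = _ := Finset.sum_congr rfl fun m _ => by
        rw [Finset.sum_mul]
        refine Finset.sum_congr rfl fun k hk => ?_
        obtain ⟨-, hkm⟩ := Finset.mem_filter.mp hk
        rw [fourier_add_pt, fourier_emb, hkm, mul_assoc]

lemma cyc_lintegral (f : ZMod n → ℝ≥0∞) :
    ∫⁻ j, f j ∂(cycMeasure n) = (n:ℝ≥0∞)⁻¹ * ∑ j, f j := by
  simp [cycMeasure, lintegral_smul_measure, lintegral_count, tsum_fintype]

lemma cyc_singleton (a : ZMod n) : cycMeasure n {a} ≠ 0 := by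
  simp [cycMeasure, Measure.count_singleton, ENNReal.inv_ne_zero,
    ENNReal.natCast_ne_top]

end Periodization

open Periodization

set_option maxHeartbeats 1000000

/-- transference / periodization: if `ψ : ℤ/nℤ → ℂ` defines a Fourier
multiplier `M_ψ` on `L^p` of the cyclic group `ℤ/nℤ` (normalized counting measure) with
norm `≤ C`, then the periodic symbol `φ = ψ ∘ q : ℤ → ℂ` (`q : ℤ → ℤ/nℤ` the quotient
map) defines a Fourier multiplier on `L^p(𝕋)` with norm `≤ C`; boundedness is expressed
on (trigonometric) polynomials, on which the multipliers are defined. -/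
theorem multiplier_periodization (n : ℕ) [NeZero n] (p : ℝ≥0∞) (hp : 1 ≤ p)
    (ψ : ZMod n → ℂ) (φ : ℤ → ℂ) (hφ : ∀ k : ℤ, φ k = ψ (k : ZMod n))
    (C : ℝ) (hC : 0 ≤ C)
    (hbound : ∀ c : ZMod n → ℂ,
      eLpNorm (fun j : ZMod n => ∑ k : ZMod n, ψ k * c k * cycChar n k j) p (cycMeasure n)
        ≤ ENNReal.ofReal C *
          eLpNorm (fun j : ZMod n => ∑ k : ZMod n, c k * cycChar n k j) p (cycMeasure n)) :
    ∀ c : ℤ →₀ ℂ,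
      eLpNorm (fun x : AddCircle (1 : ℝ) =>
          ∑ k ∈ c.support, φ k * c k * fourier k x) p volume
        ≤ ENNReal.ofReal C *
          eLpNorm (fun x : AddCircle (1 : ℝ) =>
            ∑ k ∈ c.support, c k * fourier k x) p volume := by
  classical
  intro c
  set F : AddCircle (1:ℝ) → ℂ := fun x => ∑ k ∈ c.support, φ k * c k * fourier k x with hF
  set G : AddCircle (1:ℝ) → ℂ := fun x => ∑ k ∈ c.support, c k * fourier k x with hG
  set d : AddCircle (1:ℝ) → ZMod n → ℂ := fun x m =>
    ∑ k ∈ c.support.filter (fun k : ℤ => (k : ZMod n) = m), c k * fourier k x with hd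
  have key1 : ∀ (x : AddCircle (1:ℝ)) (j : ZMod n),
      G (x + emb n j) = ∑ m : ZMod n, d x m * cycChar n m j := fun x j =>
    sum_shift c.support (fun k => c k) x j
  have key2 : ∀ (x : AddCircle (1:ℝ)) (j : ZMod n),
      F (x + emb n j) = ∑ m : ZMod n, ψ m * d x m * cycChar n m j := by
    intro x j
    refine (sum_shift c.support (fun k => φ k * c k) x j).trans ?_
    refine Finset.sum_congr rfl fun m _ => ?_
    congr 1
    refine Eq.trans ?_ (Finset.mul_sum (c.support.filter (fun k : ℤ => (k : ZMod n) = m))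
      (fun k => c k * fourier k x) (ψ m)).symm
    refine Finset.sum_congr rfl fun k hk => ?_
    obtain ⟨-, hkm⟩ := Finset.mem_filter.mp hk
    rw [hφ k, hkm, mul_assoc]
  have star : ∀ x : AddCircle (1:ℝ),
      eLpNorm (fun j => F (x + emb n j)) p (cycMeasure n)
        ≤ ENNReal.ofReal C * eLpNorm (fun j => G (x + emb n j)) p (cycMeasure n) := by
    intro x
    have h1 : (fun j => F (x + emb n j))
        = fun j : ZMod n => ∑ m : ZMod n, ψ m * d x m * cycChar n m j := funext (key2 x)
    have h2 : (fun j => G (x + emb n j))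
        = fun j : ZMod n => ∑ m : ZMod n, d x m * cycChar n m j := funext (key1 x)
    rw [h1, h2]; exact hbound (d x)
  have hFm : Measurable F := by
    apply Finset.measurable_sum
    intro k _
    exact ((map_continuous (fourier k)).measurable).const_mul _
  have hGm : Measurable G := by
    apply Finset.measurable_sum
    intro k _
    exact ((map_continuous (fourier k)).measurable).const_mul _
  rcases eq_or_ne p ∞ with rfl | hptop
  · -- p = ∞
    have hcyc : ∀ a : ZMod n, cycMeasure n {a} ≠ 0 := cyc_singleton
    have hae : ∀ᵐ x ∂(volume : Measure (AddCircle (1:ℝ))), ∀ j : ZMod n,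
        (‖G (x + emb n j)‖₊ : ℝ≥0∞) ≤ eLpNormEssSup G volume := by
      rw [ae_all_iff]
      intro j
      have h1 : ∀ᵐ y ∂(volume : Measure (AddCircle (1:ℝ))),
          (‖G y‖₊ : ℝ≥0∞) ≤ eLpNormEssSup G volume := ae_le_eLpNormEssSup
      have hmp : MeasurePreserving (fun x : AddCircle (1:ℝ) => x + emb n j) volume volume :=
        measurePreserving_add_right volume _
      exact hmp.quasiMeasurePreserving.ae
        (p := fun y => (‖G y‖₊ : ℝ≥0∞) ≤ eLpNormEssSup G volume) h1
    rw [eLpNorm_exponent_top, eLpNorm_exponent_top]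
    refine essSup_le_of_ae_le _ ?_
    filter_upwards [hae] with x hx
    have h0 : (‖F x‖₊ : ℝ≥0∞) ≤ eLpNorm (fun j => F (x + emb n j)) ∞ (cycMeasure n) := by
      rw [eLpNorm_exponent_top, eLpNormEssSup_eq_iSup hcyc]
      have he0 : x = x + emb n 0 := by
        simp [emb, ZMod.val_zero]
      conv_lhs => rw [he0]
      exact le_iSup (fun j => (‖F (x + emb n j)‖₊ : ℝ≥0∞)) 0
    refine h0.trans ((star x).trans ?_)
    refine mul_le_mul_right ?_ _
    rw [eLpNorm_exponent_top, eLpNormEssSup_eq_iSup hcyc]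
    exact iSup_le hx
  · -- p finite
    have hp0 : p ≠ 0 := (lt_of_lt_of_le zero_lt_one hp).ne'
    set pt := p.toReal with hptdef
    have hpt0 : 0 < pt := ENNReal.toReal_pos hp0 hptop
    have key_int : ∀ (u : AddCircle (1:ℝ) → ℂ), Measurable u →
        ∫⁻ x, (eLpNorm (fun j => u (x + emb n j)) p (cycMeasure n)) ^ pt ∂volume
          = ∫⁻ x, (‖u x‖₊ : ℝ≥0∞) ^ pt ∂volume := by
      intro u hu
      have hinner : ∀ x : AddCircle (1:ℝ),
          (eLpNorm (fun j => u (x + emb n j)) p (cycMeasure n)) ^ pt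
            = (n:ℝ≥0∞)⁻¹ * ∑ j : ZMod n, (‖u (x + emb n j)‖₊ : ℝ≥0∞) ^ pt := by
        intro x
        rw [eLpNorm_eq_lintegral_rpow_enorm_toReal hp0 hptop]
        simp only [enorm_eq_nnnorm]
        rw [← ENNReal.rpow_mul, one_div,
          inv_mul_cancel₀ hpt0.ne', ENNReal.rpow_one, cyc_lintegral]
      simp_rw [hinner]
      rw [lintegral_const_mul' _ _ (by simp [NeZero.ne n] : ((n:ℝ≥0∞))⁻¹ ≠ ∞)]
      rw [lintegral_finset_sum' _ (fun j _ => by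
        exact (((hu.comp (measurable_add_const (emb n j))).nnnorm.coe_nnreal_ennreal).pow_const pt).aemeasurable)]
      have heach : ∀ j : ZMod n,
          ∫⁻ x, (‖u (x + emb n j)‖₊ : ℝ≥0∞) ^ pt ∂volume
            = ∫⁻ x, (‖u x‖₊ : ℝ≥0∞) ^ pt ∂volume := fun j =>
        (measurePreserving_add_right volume (emb n j)).lintegral_comp
          (f := fun y => (‖u y‖₊ : ℝ≥0∞) ^ pt)
          ((hu.nnnorm.coe_nnreal_ennreal).pow_const pt)
      simp_rw [heach]
      rw [Finset.sum_const, Finset.card_univ, ZMod.card, nsmul_eq_mul, ← mul_assoc,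
        ENNReal.inv_mul_cancel (by exact_mod_cast Nat.cast_ne_zero.2 (NeZero.ne n))
          (by simp), one_mul]
    rw [eLpNorm_eq_lintegral_rpow_enorm_toReal hp0 hptop, eLpNorm_eq_lintegral_rpow_enorm_toReal hp0 hptop]
    simp only [enorm_eq_nnnorm]
    have mono : ∫⁻ x, (‖F x‖₊ : ℝ≥0∞) ^ pt ∂volume
        ≤ (ENNReal.ofReal C) ^ pt * ∫⁻ x, (‖G x‖₊ : ℝ≥0∞) ^ pt ∂volume := by
      rw [← key_int F hFm, ← key_int G hGm]
      calc ∫⁻ x, (eLpNorm (fun j => F (x + emb n j)) p (cycMeasure n)) ^ pt ∂volume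
          ≤ ∫⁻ x, (ENNReal.ofReal C * eLpNorm (fun j => G (x + emb n j)) p (cycMeasure n)) ^ pt
              ∂volume := lintegral_mono fun x => ENNReal.rpow_le_rpow (star x) hpt0.le
        _ = ∫⁻ x, (ENNReal.ofReal C) ^ pt
              * (eLpNorm (fun j => G (x + emb n j)) p (cycMeasure n)) ^ pt ∂volume := by
            simp_rw [ENNReal.mul_rpow_of_nonneg _ _ hpt0.le]
        _ = (ENNReal.ofReal C) ^ pt
              * ∫⁻ x, (eLpNorm (fun j => G (x + emb n j)) p (cycMeasure n)) ^ pt ∂volume :=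
            lintegral_const_mul' _ _ (ENNReal.rpow_ne_top_of_nonneg hpt0.le ENNReal.ofReal_ne_top)
    calc (∫⁻ x, (‖F x‖₊ : ℝ≥0∞) ^ pt ∂volume) ^ (1/pt)
        ≤ ((ENNReal.ofReal C) ^ pt * ∫⁻ x, (‖G x‖₊ : ℝ≥0∞) ^ pt ∂volume) ^ (1/pt) :=
          ENNReal.rpow_le_rpow mono (by positivity)
      _ = ENNReal.ofReal C * (∫⁻ x, (‖G x‖₊ : ℝ≥0∞) ^ pt ∂volume) ^ (1/pt) := by
          rw [ENNReal.mul_rpow_of_nonneg _ _ (by positivity), ← ENNReal.rpow_mul,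
            mul_one_div, div_self hpt0.ne', ENNReal.rpow_one]
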